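/- For n > 1 with prime factorization n = p_1^{k_1} ⋯ p_m^{k_m}, the number of monic separable polynomials of degree d ≥ 2 in (ℤ/n)[x] is φ(n^d) = φ(n)·n^{d-1}, where φ is Euler's totient function. -/

import Mathlib

/-!
Over a finite field `𝔽_q` every monic `f` factors uniquely as `g * h ^ 2` with `g` monic
squarefree and `h` monic, so `q ^ e = ∑ⱼ S(e - 2j) q ^ j`, where `S(k)` counts the monic
squarefree polynomials of degree `k`. Subtracting `q` times the same identity for `e - 2` gives
`S(e) = q ^ e - q ^ (e - 1)`, and over a perfect field squarefree means separable.

Over `ℤ/n`, a polynomial is separable as soon as all its images over fields are, and every map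
from `ℤ/n` to a field factors through `𝔽_p` for a prime `p ∣ n`. Recording a monic polynomial
of degree `d` by its lower coefficients, reduction modulo the primes dividing `n` becomes a
surjective additive map `(ℤ/n)^d → ∏ₚ 𝔽_p^d` whose fibres all have `(n / rad n)^d` elements, so
the count is `(n / rad n)^d ∏ₚ (p ^ d - p ^ (d - 1)) = φ(n ^ d)`.
-/

open Polynomial UniqueFactorizationMonoid

theorem exists_squarefree_mul_sq {α : Type*} [CommMonoidWithZero α] [WfDvdMonoid α] {a : α}
    (ha : a ≠ 0) : ∃ b c : α, Squarefree b ∧ a = b * c ^ 2 := by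
  induction a using (wellFounded_dvdNotUnit (α := α)).induction with
  | _ a ih =>
  by_cases hsq : Squarefree a
  · exact ⟨a, 1, hsq, by rw [one_pow, mul_one]⟩
  obtain ⟨x, ⟨y, rfl⟩, hx⟩ : ∃ x, x * x ∣ a ∧ ¬IsUnit x := by
    simpa [Squarefree] using hsq
  have hy : y ≠ 0 := right_ne_zero_of_mul ha
  obtain ⟨b, c, hb, rfl⟩ :=
    ih y ⟨hy, x * x, fun h => hx (isUnit_of_mul_isUnit_left h), mul_comm _ _⟩ hy
  exact ⟨b, x * c, hb, by rw [mul_pow, sq x]; ac_rfl⟩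

theorem associated_of_squarefree_mul_sq_eq {α : Type*} [CommMonoidWithZero α] [Nontrivial α]
    [NormalizationMonoid α] [UniqueFactorizationMonoid α] {b₁ b₂ c₁ c₂ : α}
    (hb₁ : Squarefree b₁) (hb₂ : Squarefree b₂) (hc₁ : c₁ ≠ 0) (hc₂ : c₂ ≠ 0)
    (h : b₁ * c₁ ^ 2 = b₂ * c₂ ^ 2) : Associated c₁ c₂ := by
  classical
  rw [associated_iff_normalizedFactors_eq_normalizedFactors hc₁ hc₂, Multiset.ext]
  intro π
  have hcount := congrArg (fun x => (normalizedFactors x).count π) h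
  rw [normalizedFactors_mul hb₁.ne_zero (pow_ne_zero 2 hc₁),
    normalizedFactors_mul hb₂.ne_zero (pow_ne_zero 2 hc₂), normalizedFactors_pow,
    normalizedFactors_pow, Multiset.count_add, Multiset.count_add, Multiset.count_nsmul,
    Multiset.count_nsmul] at hcount
  have h₁ := Multiset.nodup_iff_count_le_one.mp
    ((squarefree_iff_nodup_normalizedFactors hb₁.ne_zero).mp hb₁) π
  have h₂ := Multiset.nodup_iff_count_le_one.mp
    ((squarefree_iff_nodup_normalizedFactors hb₂.ne_zero).mp hb₂) π
  omega

namespace Polynomial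

section OfFn
variable {R : Type*} [Semiring R] [DecidableEq R] {d : ℕ}

theorem map_ofFn {S : Type*} [Semiring S] [DecidableEq S] (φ : R →+* S) (v : Fin d → R) :
    (ofFn d v).map φ = ofFn d (φ ∘ v) := by
  ext i
  by_cases hi : i < d <;> simp [hi, le_of_not_gt]

theorem toFn_X_pow_add_ofFn (v : Fin d → R) : toFn d (X ^ d + ofFn d v) = v := by
  ext i
  simp [toFn, coeff_X_pow, i.2.ne]

theorem monic_X_pow_add_ofFn (v : Fin d → R) : (X ^ d + ofFn d v).Monic :=
  monic_X_pow_add (ofFn_degree_lt v)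

theorem Monic.X_pow_add_ofFn_toFn {f : R[X]} (hf : f.Monic) (hd : f.natDegree = d) :
    X ^ d + ofFn d (toFn d f) = f := by
  ext k
  rcases lt_trichotomy k d with h | rfl | h
  · simp [toFn, coeff_X_pow, h, h.ne]
  · simp [← hd, hf.leadingCoeff]
  · simp [coeff_X_pow, h.ne', h.le, coeff_eq_zero_of_natDegree_lt (hd ▸ h)]

variable [Nontrivial R]

theorem natDegree_X_pow_add_ofFn (v : Fin d → R) : (X ^ d + ofFn d v).natDegree = d := by
  rw [natDegree_add_eq_left_of_degree_lt (degree_X_pow (R := R) d ▸ ofFn_degree_lt v), natDegree_X_pow]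

variable (R) in
noncomputable def monicCoeffsEquiv (d : ℕ) (P : R[X] → Prop) :
    {v : Fin d → R // P (X ^ d + ofFn d v)} ≃
      {f : R[X] // f.Monic ∧ f.natDegree = d ∧ P f} where
  toFun v := ⟨_, monic_X_pow_add_ofFn v.1, natDegree_X_pow_add_ofFn v.1, v.2⟩
  invFun f := ⟨toFn d f, by rw [f.2.1.X_pow_add_ofFn_toFn f.2.2.1]; exact f.2.2.2⟩
  left_inv v := Subtype.ext (toFn_X_pow_add_ofFn v.1)
  right_inv f := Subtype.ext (f.2.1.X_pow_add_ofFn_toFn f.2.2.1)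

theorem card_monic_natDegree_eq_and (d : ℕ) (P : R[X] → Prop) :
    Nat.card {f : R[X] // f.Monic ∧ f.natDegree = d ∧ P f} =
      Nat.card {v : Fin d → R // P (X ^ d + ofFn d v)} :=
  (Nat.card_congr (monicCoeffsEquiv R d P)).symm

theorem card_monic_natDegree_eq (d : ℕ) :
    Nat.card {f : R[X] // f.Monic ∧ f.natDegree = d} = Nat.card R ^ d := by
  simpa [Nat.card_fun] using card_monic_natDegree_eq_and (R := R) d (fun _ => True)

variable [Finite R]

instance (d : ℕ) (P : R[X] → Prop) : Finite {f : R[X] // f.Monic ∧ f.natDegree = d ∧ P f} :=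
  .of_equiv _ (monicCoeffsEquiv R d P)

instance (d : ℕ) : Finite {f : R[X] // f.Monic ∧ f.natDegree = d} :=
  .of_equiv _ (Equiv.subtypeEquivRight fun _ => by rw [and_true] :
    {f : R[X] // f.Monic ∧ f.natDegree = d ∧ True} ≃ _)

end OfFn

section FiniteField
variable (K : Type*) [Field K] [DecidableEq K]

variable {K} in
theorem Monic.exists_squarefree_mul_sq {f : K[X]} (hf : f.Monic) :
    ∃ g h : K[X], g.Monic ∧ Squarefree g ∧ h.Monic ∧ f = g * h ^ 2 := by
  obtain ⟨b, c, hb, hbc⟩ := _root_.exists_squarefree_mul_sq hf.ne_zero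
  have hc : c ≠ 0 := by rintro rfl; simp [hf.ne_zero] at hbc
  refine ⟨normalize b, normalize c, monic_normalize hb.ne_zero,
    (normalize_associated b).symm.squarefree_iff.mp hb, monic_normalize hc, ?_⟩
  rw [← hf.normalize_eq_self, hbc, normalize_mul]
  exact congrArg _ (map_pow normalizeHom c 2)

variable {K} in
theorem eq_of_squarefree_mul_sq_eq {g₁ g₂ h₁ h₂ : K[X]} (hg₁ : Squarefree g₁)
    (hg₂ : Squarefree g₂) (hh₁ : h₁.Monic) (hh₂ : h₂.Monic)
    (heq : g₁ * h₁ ^ 2 = g₂ * h₂ ^ 2) :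
    g₁ = g₂ ∧ h₁ = h₂ := by
  obtain rfl : h₁ = h₂ := eq_of_monic_of_associated hh₁ hh₂
    (associated_of_squarefree_mul_sq_eq hg₁ hg₂ hh₁.ne_zero hh₂.ne_zero heq)
  exact ⟨mul_right_cancel₀ (pow_ne_zero 2 hh₁.ne_zero) heq, rfl⟩

noncomputable def squarefreeMulSqEquiv (e : ℕ) :
    (Σ j : Fin (e / 2 + 1),
        {g : K[X] // g.Monic ∧ g.natDegree = e - 2 * j ∧ Squarefree g} ×
          {h : K[X] // h.Monic ∧ h.natDegree = j}) ≃
      {f : K[X] // f.Monic ∧ f.natDegree = e} :=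
  Equiv.ofBijective
    (fun ⟨j, g, h⟩ => ⟨g * h ^ 2, g.2.1.mul (h.2.1.pow 2), by
      rw [g.2.1.natDegree_mul (h.2.1.pow 2), natDegree_pow, g.2.2.1, h.2.2]
      omega⟩)
    ⟨by
      rintro ⟨j₁, g₁, h₁⟩ ⟨j₂, g₂, h₂⟩ heq
      obtain ⟨hg, hh⟩ := eq_of_squarefree_mul_sq_eq g₁.2.2.2 g₂.2.2.2 h₁.2.1 h₂.2.1
        (congrArg Subtype.val heq)
      obtain rfl : j₁ = j₂ := Fin.ext (h₁.2.2.symm.trans (hh ▸ h₂.2.2))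
      obtain rfl := Subtype.ext hg
      obtain rfl := Subtype.ext hh
      rfl,
    by
      rintro ⟨f, hf, rfl⟩
      obtain ⟨g, h, hg, hsq, hh, rfl⟩ := hf.exists_squarefree_mul_sq
      have hdeg := hg.natDegree_mul (hh.pow 2)
      rw [natDegree_pow] at hdeg
      exact
        ⟨⟨⟨h.natDegree, by omega⟩, ⟨g, hg, by simp only; omega, hsq⟩, ⟨h, hh, rfl⟩⟩, rfl⟩⟩

variable [Finite K]

theorem card_pow_eq_sum_card_squarefree (e : ℕ) :
    Nat.card K ^ e = ∑ j ∈ Finset.range (e / 2 + 1),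
      Nat.card {g : K[X] // g.Monic ∧ g.natDegree = e - 2 * j ∧ Squarefree g} *
        Nat.card K ^ j := by
  rw [← card_monic_natDegree_eq, ← Nat.card_congr (squarefreeMulSqEquiv K e), Nat.card_sigma,
    Finset.sum_range]
  simp only [Nat.card_prod, card_monic_natDegree_eq]

theorem card_monic_squarefree {e : ℕ} (he : 2 ≤ e) :
    Nat.card {g : K[X] // g.Monic ∧ g.natDegree = e ∧ Squarefree g} =
      Nat.card K ^ (e - 1) * (Nat.card K - 1) := by
  have hshift : ∑ j ∈ Finset.range ((e - 2) / 2 + 1),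
      Nat.card {g : K[X] // g.Monic ∧ g.natDegree = e - 2 * (j + 1) ∧ Squarefree g} *
        Nat.card K ^ (j + 1) = Nat.card K ^ (e - 1) := by
    rw [show e - 1 = e - 2 + 1 by omega, pow_succ', card_pow_eq_sum_card_squarefree K (e - 2),
      Finset.mul_sum]
    refine Finset.sum_congr rfl fun j _ => ?_
    rw [show e - 2 * (j + 1) = e - 2 - 2 * j by omega, pow_succ]
    ring
  have h := card_pow_eq_sum_card_squarefree K e
  rw [Finset.sum_range_succ', show e / 2 = (e - 2) / 2 + 1 by omega, hshift, mul_zero,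
    Nat.sub_zero, pow_zero, mul_one] at h
  rw [Nat.mul_sub_one, ← pow_succ, show e - 1 + 1 = e by omega]
  omega

theorem card_monic_separable {e : ℕ} (he : 2 ≤ e) :
    Nat.card {f : K[X] // f.Monic ∧ f.natDegree = e ∧ f.Separable} =
      Nat.card K ^ (e - 1) * (Nat.card K - 1) := by
  simp only [PerfectField.separable_iff_squarefree]
  exact card_monic_squarefree K he

end FiniteField

end Polynomial

universe u in
theorem Polynomial.Separable.of_forall_map {R : Type u} [CommRing R] {f : R[X]}
    (h : ∀ (K : Type u) [Field K] (φ : R →+* K), (f.map φ).Separable) : f.Separable := by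
  by_contra hf
  obtain ⟨M, hM, hle⟩ := Ideal.exists_le_maximal (Ideal.span {f, derivative f})
    ((Ideal.ne_top_iff_one _).mpr (mt Ideal.mem_span_pair.mp hf))
  let := Ideal.Quotient.field M
  -- `f` and `f'` both vanish at the class of `X` in the field `R[X] ⧸ M`.
  let φ := (Ideal.Quotient.mk M).comp C
  have heval : ∀ g : R[X], (g.map φ).eval (Ideal.Quotient.mk M X) = Ideal.Quotient.mk M g := by
    intro g
    rw [eval_map, ← hom_eval₂, eval₂_C_X]
  have hcop := IsCoprime.map (h _ φ) (evalRingHom (Ideal.Quotient.mk M X))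
  rw [coe_evalRingHom, derivative_map, heval, heval,
    Ideal.Quotient.eq_zero_iff_mem.mpr (hle (Ideal.subset_span (by simp))),
    Ideal.Quotient.eq_zero_iff_mem.mpr (hle (Ideal.subset_span (by simp)))] at hcop
  exact not_isCoprime_zero_zero hcop

theorem ZMod.separable_iff_forall_primeFactors {n : ℕ} (hn : n ≠ 0) {f : (ZMod n)[X]} :
    f.Separable ↔ ∀ p (hp : p ∈ n.primeFactors),
      (f.map (ZMod.castHom (Nat.dvd_of_mem_primeFactors hp) (ZMod p))).Separable := by
  refine ⟨fun hf p hp => hf.map, fun h => Separable.of_forall_map fun K _ φ => ?_⟩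
  have hpn : ringChar K ∣ n :=
    ringChar.dvd (by rw [← map_natCast φ, ZMod.natCast_self, map_zero])
  have hp : (ringChar K).Prime := (CharP.char_is_prime_or_zero K _).resolve_right
    fun h0 => hn (Nat.eq_zero_of_zero_dvd (h0 ▸ hpn))
  have hφ : φ = (ZMod.castHom dvd_rfl K).comp (ZMod.castHom hpn (ZMod (ringChar K))) :=
    Subsingleton.elim _ _
  rw [hφ, ← map_map]
  exact (h _ (Nat.mem_primeFactors.mpr ⟨hp, hpn, hn⟩)).map

theorem ZMod.piPrimeFactors_surjective (n : ℕ) :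
    Function.Surjective (RingHom.pi fun p : n.primeFactors =>
      ZMod.castHom (Nat.dvd_of_mem_primeFactors p.2) (ZMod (p : ℕ))) := by
  have hcop : Pairwise (Function.onFun Nat.Coprime fun p : n.primeFactors => (p : ℕ)) :=
    fun p q hpq => (Nat.coprime_primes (Nat.prime_of_mem_primeFactors p.2)
      (Nat.prime_of_mem_primeFactors q.2)).mpr (Subtype.coe_injective.ne hpq)
  have hdvd : ∏ p : n.primeFactors, (p : ℕ) ∣ n :=
    (Finset.prod_coe_sort n.primeFactors fun p => p) ▸ Nat.prod_primeFactors_dvd n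
  rw [Subsingleton.elim (RingHom.pi _)
    ((ZMod.prodEquivPi _ hcop).toRingHom.comp (ZMod.castHom hdvd _))]
  exact (ZMod.prodEquivPi _ hcop).surjective.comp (ZMod.ringHom_surjective _)

noncomputable def AddMonoidHom.preimageEquivProdKer {A B : Type*} [AddGroup A] [AddGroup B]
    (φ : A →+ B) (hφ : Function.Surjective φ) (T : Set B) : φ ⁻¹' T ≃ T × φ.ker where
  toFun a := (⟨φ a, a.2⟩, ⟨-Function.surjInv hφ (φ a) + a, by
    simp [Function.surjInv_eq hφ]⟩)
  invFun tk := ⟨Function.surjInv hφ tk.1 + tk.2, by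
    simp [Function.surjInv_eq hφ, φ.mem_ker.mp tk.2.2]⟩
  left_inv a := Subtype.ext (add_neg_cancel_left _ _)
  right_inv tk := by
    ext <;> simp [Function.surjInv_eq hφ, φ.mem_ker.mp tk.2.2]

theorem AddMonoidHom.card_preimage_of_surjective {A B : Type*} [AddGroup A] [AddGroup B]
    (φ : A →+ B) (hφ : Function.Surjective φ) (T : Set B) :
    Nat.card (φ ⁻¹' T) = Nat.card T * Nat.card φ.ker := by
  rw [Nat.card_congr (φ.preimageEquivProdKer hφ T), Nat.card_prod]

theorem Nat.prod_primeFactors_pos (n : ℕ) : 0 < ∏ p ∈ n.primeFactors, p :=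
  Finset.prod_pos fun _ hp => (Nat.prime_of_mem_primeFactors hp).pos

theorem Nat.totient_pow_mul_prod_primeFactors_pow (n : ℕ) {d : ℕ} (hd : d ≠ 0) :
    Nat.totient (n ^ d) * (∏ p ∈ n.primeFactors, p) ^ d =
      n ^ d * ∏ p ∈ n.primeFactors, p ^ (d - 1) * (p - 1) := by
  obtain ⟨k, rfl⟩ := Nat.exists_eq_add_one_of_ne_zero hd
  have h := Nat.totient_mul_prod_primeFactors (n ^ (k + 1))
  rw [Nat.primeFactors_pow n hd] at h
  rw [Nat.add_sub_cancel, Finset.prod_mul_distrib, Finset.prod_pow,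
    pow_succ (∏ p ∈ n.primeFactors, p), mul_left_comm, h]
  ring

theorem Nat.totient_pow (n : ℕ) {d : ℕ} (hd : d ≠ 0) :
    Nat.totient (n ^ d) = Nat.totient n * n ^ (d - 1) := by
  obtain ⟨k, rfl⟩ := Nat.exists_eq_add_one_of_ne_zero hd
  have h := Nat.totient_mul_prod_primeFactors (n ^ (k + 1))
  rw [Nat.primeFactors_pow n hd] at h
  refine Nat.eq_of_mul_eq_mul_right n.prod_primeFactors_pos ?_
  rw [h, Nat.add_sub_cancel, mul_right_comm, Nat.totient_mul_prod_primeFactors]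
  ring

theorem ZMod.card_forall_separable_X_pow_add_ofFn {n d : ℕ} (hd : 2 ≤ d) :
    Nat.card {w : Fin d → Π p : n.primeFactors, ZMod (p : ℕ) //
        ∀ p, (X ^ d + ofFn d fun i => w i p).Separable} =
      ∏ p ∈ n.primeFactors, p ^ (d - 1) * (p - 1) := by
  let e : {w : Fin d → Π p : n.primeFactors, ZMod (p : ℕ) //
        ∀ p, (X ^ d + ofFn d fun i => w i p).Separable} ≃
      Π p : n.primeFactors, {c : Fin d → ZMod (p : ℕ) // (X ^ d + ofFn d c).Separable} :=
    ((Equiv.piComm fun (_ : Fin d) (p : n.primeFactors) => ZMod (p : ℕ)).subtypeEquiv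
      (q := fun u => ∀ p, (X ^ d + ofFn d (u p)).Separable) fun _ => Iff.rfl).trans
      (Equiv.subtypePiEquivPi (β := fun p : n.primeFactors => Fin d → ZMod (p : ℕ))
        (p := fun _ c => (X ^ d + ofFn d c).Separable))
  rw [Nat.card_congr e, Nat.card_pi, ← Finset.prod_coe_sort n.primeFactors]
  refine Finset.prod_congr rfl fun p _ => ?_
  have := Fact.mk (Nat.prime_of_mem_primeFactors p.2)
  rw [← card_monic_natDegree_eq_and, card_monic_separable _ hd, Nat.card_zmod]

theorem ZMod.card_separable_X_pow_add_ofFn {n d : ℕ} (hn : n ≠ 0) (hd : 2 ≤ d) :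
    Nat.card {v : Fin d → ZMod n // (X ^ d + ofFn d v).Separable} = Nat.totient (n ^ d) := by
  let Φ := RingHom.pi fun p : n.primeFactors =>
    ZMod.castHom (Nat.dvd_of_mem_primeFactors p.2) (ZMod (p : ℕ))
  let π := Φ.toAddMonoidHom.compLeft (Fin d)
  have hπ : Function.Surjective π := (ZMod.piPrimeFactors_surjective n).comp_left
  let T : Set (Fin d → Π p : n.primeFactors, ZMod (p : ℕ)) :=
    {w | ∀ p, (X ^ d + ofFn d fun i => w i p).Separable}
  have hpre : π ⁻¹' T = {v | (X ^ d + ofFn d v).Separable} := by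
    ext v
    change (∀ p : n.primeFactors, (X ^ d + ofFn d fun i => Φ (v i) p).Separable) ↔
      (X ^ d + ofFn d v).Separable
    rw [ZMod.separable_iff_forall_primeFactors hn, Subtype.forall]
    simp only [Polynomial.map_add, Polynomial.map_pow, map_X, map_ofFn]
    rfl
  have hsource : n ^ d = (∏ p ∈ n.primeFactors, p) ^ d * Nat.card π.ker := by
    simpa [Nat.card_fun, Nat.card_pi, Finset.prod_attach n.primeFactors fun p => p] using
      π.card_preimage_of_surjective hπ Set.univ
  have hcount : Nat.card {v : Fin d → ZMod n // (X ^ d + ofFn d v).Separable} =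
      Nat.card T * Nat.card π.ker :=
    (Nat.card_congr (Equiv.setCongr hpre.symm)).trans (π.card_preimage_of_surjective hπ T)
  have hT : Nat.card T = _ := ZMod.card_forall_separable_X_pow_add_ofFn hd
  refine Nat.eq_of_mul_eq_mul_right (pow_pos n.prod_primeFactors_pos d) ?_
  rw [Nat.totient_pow_mul_prod_primeFactors_pow n (by omega), hsource, hcount, hT]
  ring

/-- The number of monic separable polynomials of degree `d ≥ 2` over `ℤ/n`, for `n > 1`,
is `φ(n^d) = φ(n)·n^(d-1)`. -/
theorem count_monic_separable_zmod_n (n d : ℕ) (hn : 1 < n) (hd : 2 ≤ d) :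
    Nat.card {f : (ZMod n)[X] | f.Monic ∧ f.natDegree = d ∧ f.Separable}
        = Nat.totient (n ^ d) ∧
      Nat.totient (n ^ d) = Nat.totient n * n ^ (d - 1) := by
  have : Fact (1 < n) := ⟨hn⟩
  refine ⟨?_, Nat.totient_pow n (by omega)⟩
  rw [← ZMod.card_separable_X_pow_add_ofFn (by omega) hd]
  exact card_monic_natDegree_eq_and d _
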